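/- arXiv:math/0603480 — 7 statements merged into one kernel-verified Lean document; each statement's English description precedes it below -/
import Mathlib

section
/- Let R ⊆ V be a subspace and ε a skew-symmetric bilinear form on R. Then L(R,ε) := {X+ξ ∈ V ⊕ V* : X ∈ R and ξ(Y) = ε(X,Y) for all Y ∈ R} is a maximal isotropic subspace of V ⊕ V* with respect to the canonical pairing. -/
/-- The canonical symmetric pairing on `V ⊕ V*`. -/
noncomputable def pairing {V : Type*} [AddCommGroup V] [Module ℝ V]
    (p q : V × Module.Dual ℝ V) : ℝ :=
  (1 / 2) * (p.2 q.1 + q.2 p.1)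

/-- A subset of `V ⊕ V*` is maximal isotropic when it equals its own orthogonal
complement with respect to the canonical pairing. -/
def IsMaxIsotropic {V : Type*} [AddCommGroup V] [Module ℝ V]
    (L : Set (V × Module.Dual ℝ V)) : Prop :=
  {p : V × Module.Dual ℝ V | ∀ q ∈ L, pairing p q = 0} = L

/-- For a subspace `R ⊆ V` and a skew-symmetric bilinear form `ε` on `R`, the set
`L(R,ε) = {X+ξ : X ∈ R, ξ(Y) = ε(X,Y) ∀ Y ∈ R}` is a maximal isotropic subspace of `V ⊕ V*`. -/
theorem stmt_1 {V : Type*} [AddCommGroup V] [Module ℝ V] [FiniteDimensional ℝ V]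
    (R : Submodule ℝ V) (ε : R →ₗ[ℝ] R →ₗ[ℝ] ℝ)
    (hskew : ∀ x y : R, ε x y = - ε y x) :
    IsMaxIsotropic {p : V × Module.Dual ℝ V |
      ∃ h : p.1 ∈ R, ∀ Y : R, p.2 Y = ε ⟨p.1, h⟩ Y} := by
  ext ⟨X, ξ⟩
  simp only [Set.mem_setOf_eq]
  constructor
  · intro hp
    have hX : X ∈ R := by
      rw [← Subspace.forall_mem_dualAnnihilator_apply_eq_zero_iff]
      intro φ hφ
      have hmem : ((0 : V), φ) ∈ {p : V × Module.Dual ℝ V |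
          ∃ h : p.1 ∈ R, ∀ Y : R, p.2 Y = ε ⟨p.1, h⟩ Y} := by
        refine ⟨R.zero_mem, fun Y => ?_⟩
        have h1 : φ (Y : V) = 0 := (Submodule.mem_dualAnnihilator φ).mp hφ Y Y.2
        have h2 : (⟨(0 : V), R.zero_mem⟩ : R) = 0 := rfl
        simp [h1, h2]
      have := hp _ hmem
      simp only [pairing, map_zero, zero_add] at this
      have h2 : φ X = 0 := by linarith
      exact h2
    refine ⟨hX, fun Y => ?_⟩
    obtain ⟨η, hη⟩ := LinearMap.exists_extend (ε Y)
    have hmem : ((Y : V), η) ∈ {p : V × Module.Dual ℝ V |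
        ∃ h : p.1 ∈ R, ∀ Y : R, p.2 Y = ε ⟨p.1, h⟩ Y} := by
      refine ⟨Y.2, fun Z => ?_⟩
      have : η ((R.subtype) Z) = ε Y Z := by rw [← LinearMap.comp_apply, hη]
      simpa using this
    have h0 := hp _ hmem
    simp only [pairing] at h0
    have hηX : η X = ε Y ⟨X, hX⟩ := by
      have : η ((R.subtype) ⟨X, hX⟩) = ε Y ⟨X, hX⟩ := by rw [← LinearMap.comp_apply, hη]
      simpa using this
    rw [hηX] at h0
    have := hskew ⟨X, hX⟩ Y
    linarith
  · rintro ⟨hX, hξ⟩ ⟨Y, η⟩ ⟨hY, hη⟩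
    simp only [pairing]
    have h1 : ξ Y = ε ⟨X, hX⟩ ⟨Y, hY⟩ := hξ ⟨Y, hY⟩
    have h2 : η X = ε ⟨Y, hY⟩ ⟨X, hX⟩ := hη ⟨X, hX⟩
    have := hskew (⟨X, hX⟩ : R) ⟨Y, hY⟩
    simp only [h1, h2] at *
    linarith
end

section
/- Let S ⊆ V* be a subspace and θ a skew-symmetric bilinear form on S. Then L(S,θ) := {X+ξ ∈ V ⊕ S : θ(ξ,η) = −η(X) for all η ∈ S} is a maximal isotropic subspace of V ⊕ V* with respect to the canonical pairing. -/
/-- For a subspace `S ⊆ V*` and a skew-symmetric bilinear form `θ` on `S`, the set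
`L(S,θ) = {X+ξ ∈ V ⊕ S : θ(ξ,η) = -η(X) ∀ η ∈ S}` is a maximal isotropic subspace
of `V ⊕ V*`. -/
theorem stmt_2 {V : Type*} [AddCommGroup V] [Module ℝ V] [FiniteDimensional ℝ V]
    (S : Submodule ℝ (Module.Dual ℝ V)) (θ : S →ₗ[ℝ] S →ₗ[ℝ] ℝ)
    (hskew : ∀ ξ η : S, θ ξ η = - θ η ξ) :
    IsMaxIsotropic {p : V × Module.Dual ℝ V |
      ∃ h : p.2 ∈ S, ∀ η : S, θ ⟨p.2, h⟩ η = - (η : Module.Dual ℝ V) p.1} := by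
  -- the evaluation map V → Dual S is surjective
  have hsurj : ∀ f : Module.Dual ℝ S, ∃ v : V,
      ∀ ζ : S, (ζ : Module.Dual ℝ V) v = f ζ := by
    intro f
    obtain ⟨φ, hφ⟩ := LinearMap.dualMap_surjective_of_injective (K := ℝ) (V₁ := S) (V₂ := Module.Dual ℝ V) (f := S.subtype) S.injective_subtype f
    refine ⟨(Module.evalEquiv ℝ V).symm φ, fun ζ => ?_⟩
    have : Module.Dual.eval ℝ V ((Module.evalEquiv ℝ V).symm φ) = φ :=
      (Module.evalEquiv ℝ V).apply_symm_apply φ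
    calc (ζ : Module.Dual ℝ V) ((Module.evalEquiv ℝ V).symm φ)
        = (Module.Dual.eval ℝ V ((Module.evalEquiv ℝ V).symm φ)) ζ := rfl
      _ = φ ζ := by rw [this]
      _ = f ζ := by rw [← hφ]; rfl
  ext p
  simp only [Set.mem_setOf_eq]
  constructor
  · intro hp
    -- Step 1: p.2 ∈ S
    have hmem : p.2 ∈ S := by
      rw [← Subspace.dualCoannihilator_dualAnnihilator_eq (W := S)]
      rw [Submodule.mem_dualAnnihilator]
      intro v hv
      rw [Submodule.mem_dualCoannihilator] at hv
      have h0 := hp (v, 0) ⟨S.zero_mem, fun η => by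
        have hz : (⟨(0 : Module.Dual ℝ V), S.zero_mem⟩ : S) = 0 := rfl
        rw [hz, map_zero, LinearMap.zero_apply, hv η η.2, neg_zero]⟩
      simp only [pairing, LinearMap.zero_apply, add_zero] at h0
      linarith
    refine ⟨hmem, fun η => ?_⟩
    -- find X with ζ X = - θ η ζ for all ζ ∈ S
    obtain ⟨v, hvζ⟩ := hsurj (-(θ η))
    simp only [LinearMap.neg_apply] at hvζ
    have hmemq : (v, (η : Module.Dual ℝ V)) ∈
        {p : V × Module.Dual ℝ V |
          ∃ h : p.2 ∈ S, ∀ ζ : S, θ ⟨p.2, h⟩ ζ = - (ζ : Module.Dual ℝ V) p.1} := by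
      refine ⟨η.2, fun ζ => ?_⟩
      have : (⟨(η : Module.Dual ℝ V), η.2⟩ : S) = η := rfl
      rw [this, hvζ ζ, neg_neg]
    have h0 := hp _ hmemq
    simp only [pairing] at h0
    have h1 : (p.2 : Module.Dual ℝ V) v + (η : Module.Dual ℝ V) p.1 = 0 := by linarith
    have h2 := hvζ ⟨p.2, hmem⟩
    rw [hskew ⟨p.2, hmem⟩ η]
    simp only at h2
    linarith
  · rintro ⟨hp, hcond⟩ q ⟨hq, hqcond⟩
    have h1 := hcond ⟨q.2, hq⟩
    have h2 := hqcond ⟨p.2, hp⟩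
    have h3 := hskew ⟨p.2, hp⟩ ⟨q.2, hq⟩
    simp only at h1 h2
    simp only [pairing]
    have : q.2 p.1 + p.2 q.1 = 0 := by
      rw [h3] at h1
      rw [h2] at h1
      linarith
    linarith
end

section
/- Let φ : V → W be a linear map between finite-dimensional real vector spaces, R ⊆ W a subspace, and ε a skew-symmetric bilinear form on R. Then the pull back of the maximal isotropic L(R,ε) ⊆ W ⊕ W* under φ is B_φ(L(R,ε)) = L(φ⁻¹(R), φ*ε), where φ*ε is the skew-symmetric bilinear form on φ⁻¹(R) defined by (φ*ε)(X,Y) = ε(φ(X), φ(Y)). -/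
/-- For a subspace `R ⊆ U` and a skew-symmetric bilinear form `ε` on `R`, the associated
maximal isotropic `L(R,ε) = {X+ξ : X ∈ R, ξ(Y) = ε(X,Y) ∀ Y ∈ R} ⊆ U ⊕ U*`. -/
def LSub {U : Type*} [AddCommGroup U] [Module ℝ U] (R : Submodule ℝ U)
    (ε : R →ₗ[ℝ] R →ₗ[ℝ] ℝ) : Set (U × Module.Dual ℝ U) :=
  {p : U × Module.Dual ℝ U | ∃ h : p.1 ∈ R, ∀ Y : R, p.2 Y = ε ⟨p.1, h⟩ Y}

/-- The pull back of `L(R,ε) ⊆ W ⊕ W*` under `φ : V → W` is `L(φ⁻¹(R), φ*ε)`, where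
`(φ*ε)(X,Y) = ε(φ(X),φ(Y))` on `φ⁻¹(R)`. -/
theorem stmt_5 {V W : Type*} [AddCommGroup V] [Module ℝ V] [FiniteDimensional ℝ V]
    [AddCommGroup W] [Module ℝ W] [FiniteDimensional ℝ W]
    (φ : V →ₗ[ℝ] W) (R : Submodule ℝ W) (ε : R →ₗ[ℝ] R →ₗ[ℝ] ℝ)
    (hskew : ∀ x y : R, ε x y = - ε y x) :
    {p : V × Module.Dual ℝ V |
      ∃ (X : V) (ξ : Module.Dual ℝ W), p = (X, φ.dualMap ξ) ∧ (φ X, ξ) ∈ LSub R ε}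
    = {p : V × Module.Dual ℝ V |
        ∃ h : φ p.1 ∈ R, ∀ Y : ↥(R.comap φ),
          p.2 Y = ε ⟨φ p.1, h⟩ ⟨φ Y, Submodule.mem_comap.mp Y.2⟩} := by
  ext p
  simp only [Set.mem_setOf_eq]
  constructor
  · rintro ⟨X, ξ, hp, hX, hξ⟩
    subst hp
    refine ⟨hX, fun Y => ?_⟩
    simpa using hξ ⟨φ Y, Submodule.mem_comap.mp Y.2⟩
  · rintro ⟨h, hY⟩
    obtain ⟨x, η⟩ := p
    simp only at h hY ⊢
    -- Build ξ : W* with ξ ∘ φ = η and ξ = ε ⟨φ x, h⟩ on R.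
    set Φ : (V × R) →ₗ[ℝ] W := φ.coprod R.subtype with hΦ
    set f : (V × R) →ₗ[ℝ] ℝ := η.coprod (ε ⟨φ x, h⟩) with hf
    have hker : LinearMap.ker Φ ≤ LinearMap.ker f := by
      rintro ⟨v, r⟩ hvr
      simp only [LinearMap.mem_ker, hΦ, LinearMap.coprod_apply, Submodule.coe_subtype] at hvr
      have hrv : (r : W) = -(φ v) := eq_neg_of_add_eq_zero_right hvr
      have hφv : φ v ∈ R := by
        have : -(r : W) ∈ R := Submodule.neg_mem _ r.2
        rwa [hrv, neg_neg] at this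
      have hr : r = -⟨φ v, hφv⟩ := by
        ext; simp [hrv]
      have hη : η v = ε ⟨φ x, h⟩ ⟨φ v, hφv⟩ := by
        simpa using hY ⟨v, Submodule.mem_comap.mpr hφv⟩
      simp [LinearMap.mem_ker, hf, hr, hη]
    obtain ⟨T, hT⟩ := Submodule.exists_isCompl (LinearMap.range Φ)
    let π := Submodule.linearProjOfIsCompl _ _ hT
    let e := Φ.quotKerEquivRange
    let fbar := (LinearMap.ker Φ).liftQ f hker
    set ξ : Module.Dual ℝ W := fbar ∘ₗ (e.symm : LinearMap.range Φ →ₗ[ℝ] _) ∘ₗ π with hξ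
    have key : ∀ q : V × R, ξ (Φ q) = f q := by
      intro q
      have h1 : π (Φ q) = ⟨Φ q, LinearMap.mem_range_self Φ q⟩ :=
        Submodule.linearProjOfIsCompl_apply_left hT ⟨Φ q, LinearMap.mem_range_self Φ q⟩
      have h2 : e ((LinearMap.ker Φ).mkQ q) = ⟨Φ q, LinearMap.mem_range_self Φ q⟩ := by
        rfl
      have h3 : e.symm ⟨Φ q, LinearMap.mem_range_self Φ q⟩ = (LinearMap.ker Φ).mkQ q := by
        rw [← h2, LinearEquiv.symm_apply_apply]
      simp only [hξ, LinearMap.comp_apply, LinearEquiv.coe_coe, h1, h3]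
      rfl
    refine ⟨x, ξ, ?_, h, ?_⟩
    · have : φ.dualMap ξ = η := by
        ext v
        have := key (v, 0)
        simpa [hΦ, hf] using this
      rw [this]
    · intro Y
      have := key (0, Y)
      simpa [hΦ, hf] using this
end

section
/- Let E and F be real vector spaces, ρ : E → F a linear map, and J : E → E a linear map with J∘J = −id. Let E_ℂ = ℂ ⊗_ℝ E and F_ℂ = ℂ ⊗_ℝ F, with J_ℂ and ρ_ℂ the complexified maps, and set L₊ = ker(J_ℂ − i·id) and L₋ = ker(J_ℂ + i·id) in E_ℂ. Then ρ_ℂ(L₊) ∩ ρ_ℂ(L₋) = Δ ⊗ ℂ, where Δ := ρ(J(ker ρ)) ⊆ F and Δ ⊗ ℂ denotes the ℂ-linear span in F_ℂ of the canonical image of Δ. -/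
open TensorProduct

private lemma baseChange_map_aux {M N : Type*} [AddCommGroup M] [Module ℝ M]
    [AddCommGroup N] [Module ℝ N] (f : M →ₗ[ℝ] N) (p : Submodule ℝ M) :
    (p.map f).baseChange ℂ = (p.baseChange ℂ).map (f.baseChange ℂ) := by
  rw [Submodule.baseChange_eq_span, Submodule.baseChange_eq_span, Submodule.map_span]
  congr 1
  ext y
  simp only [Submodule.map_coe, Set.mem_image, SetLike.mem_coe, Submodule.mem_map]
  constructor
  · rintro ⟨n, ⟨m, hm, rfl⟩, rfl⟩
    exact ⟨(1 : ℂ) ⊗ₜ m, ⟨m, hm, rfl⟩, rfl⟩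
  · rintro ⟨z, ⟨m, hm, rfl⟩, rfl⟩
    exact ⟨f m, ⟨m, hm, rfl⟩, rfl⟩

private lemma baseChange_ker_aux {M N : Type*} [AddCommGroup M] [Module ℝ M]
    [AddCommGroup N] [Module ℝ N] (f : M →ₗ[ℝ] N) :
    LinearMap.ker (f.baseChange ℂ) ≤ (LinearMap.ker f).baseChange ℂ := by
  intro x hx
  have h : LinearMap.ker (f.baseChange ℂ) =
      LinearMap.range ((LinearMap.ker f).subtype.baseChange ℂ) :=
    Module.Flat.ker_lTensor_eq (S := ℂ) (M := ℂ) f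
  rw [h] at hx
  obtain ⟨z, rfl⟩ := hx
  induction z using TensorProduct.induction_on with
  | zero => simp
  | tmul c m =>
      rw [LinearMap.baseChange_tmul]
      exact Submodule.tmul_mem_baseChange_of_mem c m.2
  | add a b ha hb =>
      rw [map_add]
      exact Submodule.add_mem _ ha hb

/-- For `ρ : E → F` linear and `J : E → E` with `J² = -id`, the intersection of the images
under `ρ_ℂ` of the `±i`-eigenspaces `L₊ = ker(J_ℂ - i)` and `L₋ = ker(J_ℂ + i)` of the
complexification `J_ℂ` is `Δ ⊗ ℂ`, where `Δ = ρ(J(ker ρ))`. -/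
theorem stmt_7 {E F : Type*} [AddCommGroup E] [Module ℝ E] [AddCommGroup F] [Module ℝ F]
    (ρ : E →ₗ[ℝ] F) (J : E →ₗ[ℝ] E) (hJ : J ∘ₗ J = -LinearMap.id) :
    Submodule.map (ρ.baseChange ℂ)
        (LinearMap.ker (J.baseChange ℂ - Complex.I • LinearMap.id))
      ⊓ Submodule.map (ρ.baseChange ℂ)
        (LinearMap.ker (J.baseChange ℂ + Complex.I • LinearMap.id))
    = Submodule.baseChange ℂ (((LinearMap.ker ρ).map J).map ρ) := by
  have hJJ : ∀ v : E, J (J v) = -v := by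
    intro v
    have := LinearMap.congr_fun hJ v
    simpa using this
  apply le_antisymm
  · rintro w ⟨⟨a, ha, rfl⟩, b, hb, hab⟩
    rw [SetLike.mem_coe, LinearMap.mem_ker] at ha hb
    simp only [LinearMap.sub_apply, LinearMap.smul_apply, LinearMap.id_apply,
      sub_eq_zero] at ha
    simp only [LinearMap.add_apply, LinearMap.smul_apply, LinearMap.id_apply,
      add_eq_zero_iff_eq_neg] at hb
    -- k := a - b lies in the kernel of ρ_ℂ
    set k : ℂ ⊗[ℝ] E := a - b with hk
    have hkker : k ∈ LinearMap.ker (ρ.baseChange ℂ) := by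
      rw [LinearMap.mem_ker, hk, map_sub, hab, sub_self]
    have hkbc : k ∈ (LinearMap.ker ρ).baseChange ℂ := baseChange_ker_aux ρ hkker
    -- a = (1/2) • (k - I • J_ℂ k)
    have hJk : J.baseChange ℂ k = Complex.I • (a + b) := by
      rw [hk, map_sub, ha, hb, sub_neg_eq_add, smul_add]
    have haeq : a = (2 : ℂ)⁻¹ • (k - Complex.I • J.baseChange ℂ k) := by
      rw [hJk, smul_smul, Complex.I_mul_I, hk]
      rw [neg_one_smul, sub_neg_eq_add]
      rw [show a - b + (a + b) = (2 : ℂ) • a by rw [two_smul]; abel]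
      rw [smul_smul, inv_mul_cancel₀ (two_ne_zero), one_smul]
    -- hence ρ_ℂ a lies in the base change of Δ
    have hmem : ρ.baseChange ℂ (J.baseChange ℂ k) ∈
        Submodule.baseChange ℂ (((LinearMap.ker ρ).map J).map ρ) := by
      rw [baseChange_map_aux, baseChange_map_aux]
      exact ⟨J.baseChange ℂ k, ⟨k, hkbc, rfl⟩, rfl⟩
    rw [haeq, map_smul, map_sub, map_smul]
    have hρk : ρ.baseChange ℂ k = 0 := hkker
    rw [hρk, zero_sub]
    exact Submodule.smul_mem _ _ (Submodule.neg_mem _ (Submodule.smul_mem _ _ hmem))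
  · rw [Submodule.baseChange_eq_span]
    rw [Submodule.span_le]
    rintro - ⟨-, ⟨-, ⟨v, hv, rfl⟩, rfl⟩, rfl⟩
    rw [SetLike.mem_coe, LinearMap.mem_ker] at hv
    rw [SetLike.mem_coe, Submodule.mem_inf]
    constructor
    · -- 1 ⊗ ρ(J v) = ρ_ℂ (1 ⊗ J v + I • (1 ⊗ v))
      refine ⟨(1 : ℂ) ⊗ₜ J v + Complex.I • ((1 : ℂ) ⊗ₜ v), ?_, ?_⟩
      · rw [SetLike.mem_coe, LinearMap.mem_ker]
        simp only [LinearMap.sub_apply, LinearMap.smul_apply, LinearMap.id_apply,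
          map_add, map_smul, LinearMap.baseChange_tmul, hJJ]
        rw [smul_sub, smul_smul, Complex.I_mul_I, neg_one_smul, tmul_neg]
        abel
      · simp only [map_add, map_smul, LinearMap.baseChange_tmul, hv, tmul_zero, smul_zero,
          add_zero]
        rfl
    · refine ⟨(1 : ℂ) ⊗ₜ J v - Complex.I • ((1 : ℂ) ⊗ₜ v), ?_, ?_⟩
      · rw [SetLike.mem_coe, LinearMap.mem_ker]
        simp only [LinearMap.add_apply, LinearMap.smul_apply, LinearMap.id_apply,
          map_sub, map_smul, LinearMap.baseChange_tmul, hJJ]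
        rw [smul_add, smul_smul, Complex.I_mul_I, neg_one_smul, tmul_neg]
        abel
      · simp only [map_sub, map_smul, LinearMap.baseChange_tmul, hv, tmul_zero, smul_zero,
          sub_zero]
        rfl
end

section
/- Let W ⊆ V be a subspace, B := W ⊕ V* ⊆ V ⊕ V*, and B^⊥ = {0} ⊕ W° its orthogonal complement with respect to the canonical pairing. Let J : V ⊕ V* → V ⊕ V* be a linear map with J∘J = −id that is orthogonal with respect to the canonical pairing. Then the following are equivalent: (i) B = (B ∩ J(B)) + B^⊥; (ii) J(B) ⊆ B + J(B^⊥); (iii) J(B^⊥) ∩ B ⊆ B^⊥. -/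
open Module LinearMap LinearMap.BilinForm

/-- The canonical pairing as a bilinear form. -/
noncomputable def pForm {V : Type*} [AddCommGroup V] [Module ℝ V] :
    LinearMap.BilinForm ℝ (V × Module.Dual ℝ V) :=
  LinearMap.mk₂ ℝ pairing
    (by intro p p' q; simp [pairing]; ring)
    (by intro c p q; simp [pairing]; ring)
    (by intro p q q'; simp [pairing]; ring)
    (by intro c p q; simp [pairing]; ring)

@[simp] lemma pForm_apply {V : Type*} [AddCommGroup V] [Module ℝ V]
    (p q : V × Module.Dual ℝ V) : pForm p q = pairing p q := rfl

lemma pForm_symm {V : Type*} [AddCommGroup V] [Module ℝ V]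
    (p q : V × Module.Dual ℝ V) : pForm p q = pForm q p := by
  simp [pairing]; ring

lemma pForm_refl {V : Type*} [AddCommGroup V] [Module ℝ V] :
    (pForm (V := V)).IsRefl := fun p q h => by rw [pForm_symm]; exact h

lemma pForm_nondeg {V : Type*} [AddCommGroup V] [Module ℝ V] :
    (pForm (V := V)).Nondegenerate := by
  apply (LinearMap.IsRefl.nondegenerate_iff_separatingLeft (B := pForm (V := V)) (by exact pForm_refl)).mpr
  intro x h
  have h1 : x.2 = 0 := by
    ext v
    have := h (v, 0)
    simp [pairing] at this
    simpa using this
  have h2 : x.1 = 0 := by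
    rw [← Module.forall_dual_apply_eq_zero_iff ℝ x.1]
    intro ξ
    have := h (0, ξ)
    simp [pairing] at this
    simpa using this
  exact Prod.ext h2 h1

/-- `B⊥ = 0 ⊕ W°` is the pairing-orthogonal of `B = W ⊕ V*`. -/
lemma orth_B {V : Type*} [AddCommGroup V] [Module ℝ V] (W : Submodule ℝ V) :
    (pForm (V := V)).orthogonal (W.prod ⊤) =
      (⊥ : Submodule ℝ V).prod W.dualAnnihilator := by
  ext m
  rw [LinearMap.BilinForm.mem_orthogonal_iff]
  constructor
  · intro h
    refine Submodule.mem_prod.mpr ⟨?_, ?_⟩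
    · rw [Submodule.mem_bot, ← Module.forall_dual_apply_eq_zero_iff ℝ m.1]
      intro ξ
      have := h (0, ξ) (Submodule.mem_prod.mpr ⟨W.zero_mem, trivial⟩)
      simp [LinearMap.BilinForm.IsOrtho, pairing] at this
      simpa using this
    · rw [Submodule.mem_dualAnnihilator]
      intro w hw
      have := h (w, 0) (Submodule.mem_prod.mpr ⟨hw, trivial⟩)
      simp [LinearMap.BilinForm.IsOrtho, pairing] at this
      simpa using this
  · intro hm n hn
    obtain ⟨hn1, -⟩ := Submodule.mem_prod.mp hn
    obtain ⟨hm1, hm2⟩ := Submodule.mem_prod.mp hm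
    rw [Submodule.mem_bot] at hm1
    rw [Submodule.mem_dualAnnihilator] at hm2
    simp [LinearMap.BilinForm.IsOrtho, pairing, hm1, hm2 n.1 hn1]

lemma orth_sup {V : Type*} [AddCommGroup V] [Module ℝ V]
    (S T : Submodule ℝ (V × Module.Dual ℝ V)) :
    (pForm (V := V)).orthogonal (S ⊔ T) =
      (pForm (V := V)).orthogonal S ⊓ (pForm (V := V)).orthogonal T := by
  ext m
  simp only [Submodule.mem_inf, LinearMap.BilinForm.mem_orthogonal_iff]
  constructor
  · intro h
    exact ⟨fun n hn => h n (Submodule.mem_sup_left hn),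
      fun n hn => h n (Submodule.mem_sup_right hn)⟩
  · rintro ⟨h1, h2⟩ n hn
    obtain ⟨s, hs, t, ht, rfl⟩ := Submodule.mem_sup.mp hn
    have e1 := h1 s hs
    have e2 := h2 t ht
    simp [map_add, e1, e2]

lemma orth_inf {V : Type*} [AddCommGroup V] [Module ℝ V] [FiniteDimensional ℝ V]
    (S T : Submodule ℝ (V × Module.Dual ℝ V)) :
    (pForm (V := V)).orthogonal (S ⊓ T) =
      (pForm (V := V)).orthogonal S ⊔ (pForm (V := V)).orthogonal T := by
  have h : S ⊓ T = (pForm (V := V)).orthogonal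
      ((pForm (V := V)).orthogonal S ⊔ (pForm (V := V)).orthogonal T) := by
    rw [orth_sup, orthogonal_orthogonal pForm_nondeg pForm_refl,
      orthogonal_orthogonal pForm_nondeg pForm_refl]
  rw [h, orthogonal_orthogonal pForm_nondeg pForm_refl]

/-- For `B = W ⊕ V*`, `B^⊥ = 0 ⊕ W°`, and `J` orthogonal with `J² = -id`, the following are
equivalent: (i) `B = B ∩ J(B) + B^⊥`; (ii) `J(B) ⊆ B + J(B^⊥)`; (iii) `J(B^⊥) ∩ B ⊆ B^⊥`. -/
theorem stmt_8 {V : Type*} [AddCommGroup V] [Module ℝ V] [FiniteDimensional ℝ V]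
    (W : Submodule ℝ V)
    (J : (V × Module.Dual ℝ V) →ₗ[ℝ] (V × Module.Dual ℝ V))
    (hJ2 : J ∘ₗ J = -LinearMap.id)
    (hJorth : ∀ x y : V × Module.Dual ℝ V, pairing (J x) (J y) = pairing x y) :
    ((W.prod ⊤ = (W.prod ⊤ ⊓ Submodule.map J (W.prod ⊤))
        ⊔ (⊥ : Submodule ℝ V).prod W.dualAnnihilator)
      ↔ (Submodule.map J (W.prod ⊤) ≤ W.prod ⊤
        ⊔ Submodule.map J ((⊥ : Submodule ℝ V).prod W.dualAnnihilator))) ∧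
    ((Submodule.map J (W.prod ⊤) ≤ W.prod ⊤
        ⊔ Submodule.map J ((⊥ : Submodule ℝ V).prod W.dualAnnihilator))
      ↔ (Submodule.map J ((⊥ : Submodule ℝ V).prod W.dualAnnihilator) ⊓ W.prod ⊤
        ≤ (⊥ : Submodule ℝ V).prod W.dualAnnihilator)) := by
  set B := W.prod (⊤ : Submodule ℝ (Module.Dual ℝ V)) with hB
  set Bp := (⊥ : Submodule ℝ V).prod W.dualAnnihilator with hBpdef
  have horthB : (pForm (V := V)).orthogonal B = Bp := orth_B W
  have hJJ : ∀ x, J (J x) = -x := fun x => by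
    have := LinearMap.congr_fun hJ2 x; simpa using this
  have hJinj : Function.Injective J := fun a b h => by
    have : J (J a) = J (J b) := congrArg J h
    rw [hJJ, hJJ] at this
    exact neg_injective this
  have hmapJJ : ∀ S : Submodule ℝ (V × Module.Dual ℝ V),
      Submodule.map J (Submodule.map J S) = S := by
    intro S
    ext x
    constructor
    · rintro ⟨y, ⟨z, hz, rfl⟩, rfl⟩
      rw [hJJ]
      exact S.neg_mem hz
    · intro hx
      refine ⟨J (-x), ⟨-x, S.neg_mem hx, rfl⟩, ?_⟩
      rw [hJJ]; simp
  have hJorth' : ∀ x y, pForm (J x) (J y) = pForm x y := hJorth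
  have hJorthS : ∀ S : Submodule ℝ (V × Module.Dual ℝ V),
      Submodule.map J ((pForm (V := V)).orthogonal S) =
        (pForm (V := V)).orthogonal (Submodule.map J S) := by
    intro S
    ext x
    simp only [Submodule.mem_map, LinearMap.BilinForm.mem_orthogonal_iff,
      LinearMap.BilinForm.IsOrtho]
    constructor
    · rintro ⟨y, hy, rfl⟩ n hn
      obtain ⟨s, hs, rfl⟩ := hn
      rw [hJorth' s y]
      exact hy s hs
    · intro h
      refine ⟨-J x, fun s hs => ?_, by rw [map_neg, hJJ]; simp⟩
      have := h (J s) ⟨s, hs, rfl⟩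
      have e : pForm s (J x) = 0 := by
        rw [← hJorth' s (J x), hJJ, map_neg, neg_eq_zero]
        simpa using this
      rw [map_neg, neg_eq_zero]
      exact e
  have hBp_le_B : Bp ≤ B := Submodule.prod_mono bot_le le_top
  have hperp : ∀ m ∈ Bp, ∀ n ∈ B, pForm n m = 0 := by
    intro m hm
    rw [← horthB] at hm
    exact fun n hn => hm n hn
  -- (i) → (ii)
  have h12 : B = (B ⊓ Submodule.map J B) ⊔ Bp →
      Submodule.map J B ≤ B ⊔ Submodule.map J Bp := by
    intro h
    calc Submodule.map J B = Submodule.map J ((B ⊓ Submodule.map J B) ⊔ Bp) := by rw [← h]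
      _ = (Submodule.map J B ⊓ Submodule.map J (Submodule.map J B)) ⊔ Submodule.map J Bp := by
          rw [Submodule.map_sup, Submodule.map_inf J hJinj]
      _ = (Submodule.map J B ⊓ B) ⊔ Submodule.map J Bp := by rw [hmapJJ]
      _ ≤ B ⊔ Submodule.map J Bp := sup_le_sup_right inf_le_right _
  -- (ii) → (iii)
  have h23 : Submodule.map J B ≤ B ⊔ Submodule.map J Bp →
      Submodule.map J Bp ⊓ B ≤ Bp := by
    intro h x hx
    obtain ⟨hx1, hx2⟩ := hx
    rw [← horthB, LinearMap.BilinForm.mem_orthogonal_iff]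
    intro b hb
    obtain ⟨e, he, rfl⟩ := hx1
    have hJb : J b ∈ B ⊔ Submodule.map J Bp := h (Submodule.mem_map_of_mem hb)
    obtain ⟨c, hc, z, hz, hcz⟩ := Submodule.mem_sup.mp hJb
    obtain ⟨d, hd, rfl⟩ := hz
    have key1 : pForm c e = 0 := hperp e he c hc
    have key2 : pForm (J d) e = 0 := by
      have s1 : pForm (J e) d = 0 := hperp d hd (J e) hx2
      have : pForm (J d) e = - pForm (J e) d := by
        rw [pForm_symm, ← hJorth' e (J d), hJJ]
        simp [map_neg]
      rw [this, s1, neg_zero]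
    show pForm b (J e) = 0
    calc pForm b (J e) = pForm (J b) (J (J e)) := (hJorth' _ _).symm
      _ = - pForm (J b) e := by rw [hJJ]; simp [map_neg]
      _ = - (pForm c e + pForm (J d) e) := by rw [← hcz]; simp [map_add]
      _ = 0 := by rw [key1, key2]; simp
  -- (iii) → (i)
  have h31 : Submodule.map J Bp ⊓ B ≤ Bp →
      B = (B ⊓ Submodule.map J B) ⊔ Bp := by
    intro h
    have e1 : (pForm (V := V)).orthogonal Bp = B := by
      rw [← horthB, orthogonal_orthogonal pForm_nondeg pForm_refl]
    have e2 : (pForm (V := V)).orthogonal (Submodule.map J Bp) = Submodule.map J B := by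
      rw [← horthB, hJorthS, orthogonal_orthogonal pForm_nondeg pForm_refl]
    have key : B ≤ Submodule.map J B ⊔ Bp := by
      calc B = (pForm (V := V)).orthogonal Bp := e1.symm
        _ ≤ (pForm (V := V)).orthogonal (Submodule.map J Bp ⊓ B) :=
            LinearMap.BilinForm.orthogonal_le h
        _ = (pForm (V := V)).orthogonal (Submodule.map J Bp)
              ⊔ (pForm (V := V)).orthogonal B := orth_inf _ _
        _ = Submodule.map J B ⊔ Bp := by rw [e2, horthB]
    apply le_antisymm
    · intro x hx
      obtain ⟨j, hj, e, he, hje⟩ := Submodule.mem_sup.mp (key hx)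
      have hjB : j ∈ B := by
        have : j = x - e := by rw [← hje]; abel
        rw [this]
        exact B.sub_mem hx (hBp_le_B he)
      exact Submodule.mem_sup.mpr ⟨j, Submodule.mem_inf.mpr ⟨hjB, hj⟩, e, he, hje⟩
    · exact sup_le inf_le_left hBp_le_B
  exact ⟨⟨h12, fun h => h31 (h23 h)⟩, ⟨h23, fun h => h12 (h31 h)⟩⟩
end

section
/- Let W ⊆ V be a subspace and π : V* → V a linear map with W ∩ π(W°) = 0. If η, η' ∈ V* satisfy π(η) ∈ W, π(η') ∈ W, and η − η' ∈ W°, then π(η) = π(η'). Consequently the assignment ξ ↦ π(η), for any η ∈ V* with η|_W = ξ and π(η) ∈ W, gives a well-defined map from the set of such restrictions ξ ∈ W* into W. -/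
/-- If `W ∩ π(W°) = 0` then `π(η) ∈ W`, `π(η') ∈ W` and `η - η' ∈ W°` imply
`π(η) = π(η')`; consequently `ξ ↦ π(η)`, for `η` restricting to `ξ` on `W` with
`π(η) ∈ W`, is a well-defined map from such restrictions `ξ ∈ W*` into `W`. -/
theorem stmt_13 {V : Type*} [AddCommGroup V] [Module ℝ V] [FiniteDimensional ℝ V]
    (W : Submodule ℝ V) (π : Module.Dual ℝ V →ₗ[ℝ] V)
    (hWπ : W ⊓ Submodule.map π W.dualAnnihilator = ⊥) :
    (∀ η η' : Module.Dual ℝ V, π η ∈ W → π η' ∈ W → η - η' ∈ W.dualAnnihilator →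
      π η = π η') ∧
    ∃ f : Module.Dual ℝ ↥W → ↥W,
      ∀ η : Module.Dual ℝ V, π η ∈ W → (f (η ∘ₗ W.subtype) : V) = π η := by
  have key : ∀ η η' : Module.Dual ℝ V, π η ∈ W → π η' ∈ W → η - η' ∈ W.dualAnnihilator →
      π η = π η' := by
    intro η η' hη hη' hd
    have h1 : π η - π η' ∈ W ⊓ Submodule.map π W.dualAnnihilator := by
      refine ⟨W.sub_mem hη hη', ⟨η - η', hd, by simp⟩⟩
    rw [hWπ, Submodule.mem_bot, sub_eq_zero] at h1
    exact h1
  refine ⟨key, ?_⟩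
  classical
  refine ⟨fun ξ => if h : ∃ η : Module.Dual ℝ V, η ∘ₗ W.subtype = ξ ∧ π η ∈ W
      then ⟨π h.choose, h.choose_spec.2⟩ else 0, ?_⟩
  intro η hη
  have h : ∃ η' : Module.Dual ℝ V, η' ∘ₗ W.subtype = η ∘ₗ W.subtype ∧ π η' ∈ W :=
    ⟨η, rfl, hη⟩
  dsimp only
  rw [dif_pos h]
  refine key _ _ h.choose_spec.2 hη ?_
  rw [Submodule.mem_dualAnnihilator]
  intro w hw
  have := congrFun (congrArg (fun g => g.toFun) h.choose_spec.1) ⟨w, hw⟩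
  simpa [sub_eq_zero] using this
end

section
/- Let W be a real vector space and ψ₁, ψ₂ : W → W linear maps with ψ₁∘ψ₁ = −id and ψ₂∘ψ₂ = −id. Let Ψ₁, Ψ₂ be their complexifications acting on W_ℂ = ℂ ⊗_ℝ W, and for k = 1,2 set L^k_+ = ker(Ψ_k − i·id) and L^k_− = ker(Ψ_k + i·id). Then ψ₁ and ψ₂ commute if and only if W_ℂ is the internal direct sum of the four subspaces (L¹_+ ∩ L²_+), (L¹_+ ∩ L²_−), (L¹_− ∩ L²_+), and (L¹_− ∩ L²_−). -/
open TensorProduct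

section Aux

variable {M : Type*} [AddCommGroup M] [Module ℂ M]

/-- Projection onto the `c`-eigenspace of `T` (when `T² = -1`, `c² = -1`). -/
noncomputable def stmt14_pr (c : ℂ) (T : Module.End ℂ M) : Module.End ℂ M :=
  ((-2⁻¹ : ℂ) * c) • (T + c • LinearMap.id)

lemma stmt14_pr_apply (c : ℂ) (T : Module.End ℂ M) (x : M) :
    stmt14_pr c T x = ((-2⁻¹ : ℂ) * c) • (T x + c • x) := rfl

lemma stmt14_eig_pr {c : ℂ} (hc : c * c = -1) {T : Module.End ℂ M}
    (hT : ∀ y, T (T y) = -y) (x : M) :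
    T (stmt14_pr c T x) = c • stmt14_pr c T x := by
  simp only [stmt14_pr_apply, map_smul, map_add, hT x]
  match_scalars
  · linear_combination (2⁻¹ * c : ℂ) * hc
  · ring

lemma stmt14_pr_eig {c : ℂ} (hc : c * c = -1) {T : Module.End ℂ M} {x : M}
    (hx : T x = c • x) : stmt14_pr c T x = x := by
  rw [stmt14_pr_apply, hx]
  match_scalars
  linear_combination (-1 : ℂ) * hc

lemma stmt14_pr_eig_neg {c : ℂ} (_hc : c * c = -1) {T : Module.End ℂ M} {x : M}
    (hx : T x = (-c) • x) : stmt14_pr c T x = 0 := by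
  rw [stmt14_pr_apply, hx]
  match_scalars
  ring

lemma stmt14_pr_sum {c : ℂ} (hc : c * c = -1) (T : Module.End ℂ M) (x : M) :
    stmt14_pr c T x + stmt14_pr (-c) T x = x := by
  simp only [stmt14_pr_apply]
  match_scalars
  · ring
  · linear_combination (-1 : ℂ) * hc

lemma stmt14_pr_comm {c : ℂ} {T S : Module.End ℂ M}
    (hTS : ∀ y, S (T y) = T (S y)) (x : M) :
    S (stmt14_pr c T x) = stmt14_pr c T (S x) := by
  simp only [stmt14_pr_apply, map_smul, map_add, hTS x, LinearMap.id_apply]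

end Aux

theorem stmt14_main {M : Type*} [AddCommGroup M] [Module ℂ M]
    (c : Bool → ℂ) (hcc : ∀ b, c b * c b = -1)
    (hne : ∀ b b' : Bool, b ≠ b' → c b' = -c b)
    {T S : Module.End ℂ M}
    (hT : ∀ y, T (T y) = -y) (hS : ∀ y, S (S y) = -y) :
    (∀ y, T (S y) = S (T y)) ↔ DirectSum.IsInternal (fun s : Bool × Bool =>
      LinearMap.ker (T - c s.1 • LinearMap.id) ⊓
      LinearMap.ker (S - c s.2 • LinearMap.id)) := by
  set V : Bool × Bool → Submodule ℂ M := fun s =>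
      LinearMap.ker (T - c s.1 • LinearMap.id) ⊓
      LinearMap.ker (S - c s.2 • LinearMap.id) with hV
  have hmem : ∀ (s : Bool × Bool) (x : M), x ∈ V s ↔ T x = c s.1 • x ∧ S x = c s.2 • x := by
    intro s x
    simp [hV, Submodule.mem_inf, LinearMap.mem_ker, LinearMap.sub_apply,
      LinearMap.smul_apply, LinearMap.id_apply, sub_eq_zero]
  constructor
  · intro hTS
    have hST : ∀ y, S (T y) = T (S y) := fun y => (hTS y).symm
    set E : Bool × Bool → Module.End ℂ M :=
      fun s => (stmt14_pr (c s.1) T).comp (stmt14_pr (c s.2) S) with hE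
    have hE_mem : ∀ (s : Bool × Bool) (x : M), E s x ∈ V s := by
      intro s x
      rw [hmem]
      constructor
      · exact stmt14_eig_pr (hcc s.1) hT _
      · show S (stmt14_pr (c s.1) T (stmt14_pr (c s.2) S x)) = _
        rw [stmt14_pr_comm hST, stmt14_eig_pr (hcc s.2) hS, map_smul]
        rfl
    have hE_sum : ∀ x : M, ∑ s : Bool × Bool, E s x = x := by
      intro x
      rw [Fintype.sum_prod_type]
      have hSsum : ∑ b2 : Bool, stmt14_pr (c b2) S x = x := by
        rw [Fintype.sum_bool]
        have : c false = -c true := hne true false (by decide)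
        rw [this]
        exact stmt14_pr_sum (hcc true) S x
      have : ∀ b1 : Bool, ∑ b2 : Bool, E (b1, b2) x = stmt14_pr (c b1) T x := by
        intro b1
        rw [show ∑ b2 : Bool, E (b1, b2) x
            = stmt14_pr (c b1) T (∑ b2 : Bool, stmt14_pr (c b2) S x) by
          rw [map_sum]; rfl, hSsum]
      rw [Finset.sum_congr rfl fun b1 _ => this b1, Fintype.sum_bool,
        hne true false (by decide)]
      exact stmt14_pr_sum (hcc true) T x
    have hE_of : ∀ (s t : Bool × Bool) (x : M), x ∈ V t → E s x = if s = t then x else 0 := by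
      rintro ⟨s1, s2⟩ ⟨t1, t2⟩ x hx
      obtain ⟨hx1, hx2⟩ := (hmem _ x).1 hx
      by_cases h2 : s2 = t2
      · subst h2
        have hin : stmt14_pr (c s2) S x = x := stmt14_pr_eig (hcc s2) hx2
        by_cases h1 : s1 = t1
        · subst h1
          simp only [if_pos rfl]
          show stmt14_pr (c s1) T (stmt14_pr (c s2) S x) = x
          rw [hin]
          exact stmt14_pr_eig (hcc s1) hx1
        · rw [if_neg (by simp [h1])]
          show stmt14_pr (c s1) T (stmt14_pr (c s2) S x) = 0
          rw [hin]
          exact stmt14_pr_eig_neg (hcc s1) (by rw [hx1, hne s1 t1 h1])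
      · rw [if_neg (by simp [h2])]
        show stmt14_pr (c s1) T (stmt14_pr (c s2) S x) = 0
        rw [stmt14_pr_eig_neg (hcc s2) (by rw [hx2, hne s2 t2 h2]), map_zero]
    constructor
    · rw [injective_iff_map_eq_zero]
      intro x hx0
      have hsum0 : ∑ s : Bool × Bool, ((x s : M)) = 0 := by
        rw [← hx0]
        conv_rhs => rw [← DirectSum.sum_univ_of x]
        rw [map_sum]
        exact Finset.sum_congr rfl fun s _ => (DirectSum.coeAddMonoidHom_of V s (x s)).symm
      refine DFinsupp.ext fun t => Subtype.ext ?_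
      have : (x t : M) = ∑ s : Bool × Bool, E t ((x s : M)) := by
        rw [Finset.sum_congr rfl fun s _ => hE_of t s _ (x s).2]
        simp
      rw [this, ← map_sum, hsum0, map_zero]
      rfl
    · intro y
      refine ⟨∑ s : Bool × Bool, DirectSum.of (fun s => V s) s ⟨E s y, hE_mem s y⟩, ?_⟩
      rw [map_sum]
      rw [Finset.sum_congr rfl fun s _ => DirectSum.coeAddMonoidHom_of V s _]
      exact hE_sum y
  · intro hInt y
    have hy : S y ∈ (⊤ : Submodule ℂ M) := Submodule.mem_top
    have hy' : y ∈ ⨆ s, V s := hInt.submodule_iSup_eq_top ▸ Submodule.mem_top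
    refine Submodule.iSup_induction (motive := fun z => T (S z) = S (T z)) V hy' ?_ ?_ ?_
    · intro s x hx
      obtain ⟨h1, h2⟩ := (hmem s x).1 hx
      rw [h1, h2, map_smul, map_smul, h1, h2, smul_smul, smul_smul, mul_comm]
    · simp
    · intro a b ha hb
      simp [map_add, ha, hb]

/-- For `ψ₁, ψ₂ : W → W` with `ψₖ² = -id` and complexifications `Ψₖ` on `W_ℂ = ℂ ⊗ W` with
`±i`-eigenspaces `L^k_± = ker(Ψₖ ∓ i)`, the maps `ψ₁` and `ψ₂` commute iff `W_ℂ` is the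
internal direct sum of the four intersections `L¹_± ∩ L²_±`. -/
theorem stmt_14 {W : Type*} [AddCommGroup W] [Module ℝ W]
    (ψ₁ ψ₂ : W →ₗ[ℝ] W)
    (h₁ : ψ₁ ∘ₗ ψ₁ = -LinearMap.id) (h₂ : ψ₂ ∘ₗ ψ₂ = -LinearMap.id) :
    ψ₁ ∘ₗ ψ₂ = ψ₂ ∘ₗ ψ₁ ↔
    DirectSum.IsInternal (fun s : Bool × Bool =>
      LinearMap.ker (ψ₁.baseChange ℂ - (if s.1 then Complex.I else -Complex.I) • LinearMap.id)
      ⊓ LinearMap.ker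
        (ψ₂.baseChange ℂ - (if s.2 then Complex.I else -Complex.I) • LinearMap.id)) := by
  have hcc : ∀ b : Bool, (fun b : Bool => if b then Complex.I else -Complex.I) b *
      (fun b : Bool => if b then Complex.I else -Complex.I) b = -1 := by
    intro b; cases b <;> simp [Complex.I_mul_I]
  have hne : ∀ b b' : Bool, b ≠ b' →
      (fun b : Bool => if b then Complex.I else -Complex.I) b' =
      -(fun b : Bool => if b then Complex.I else -Complex.I) b := by
    intro b b' h; cases b <;> cases b' <;> simp_all
  have hA : ∀ y, ψ₁.baseChange ℂ (ψ₁.baseChange ℂ y) = -y := by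
    intro y
    have h : (ψ₁ ∘ₗ ψ₁).baseChange ℂ = -LinearMap.id := by
      rw [h₁, LinearMap.baseChange_neg, LinearMap.baseChange_id]
    have := DFunLike.congr_fun ((LinearMap.baseChange_comp ψ₁ ψ₁).symm.trans h) y
    simpa using this
  have hB : ∀ y, ψ₂.baseChange ℂ (ψ₂.baseChange ℂ y) = -y := by
    intro y
    have h : (ψ₂ ∘ₗ ψ₂).baseChange ℂ = -LinearMap.id := by
      rw [h₂, LinearMap.baseChange_neg, LinearMap.baseChange_id]
    have := DFunLike.congr_fun ((LinearMap.baseChange_comp ψ₂ ψ₂).symm.trans h) y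
    simpa using this
  have key := stmt14_main (fun b : Bool => if b then Complex.I else -Complex.I)
    hcc hne hA hB
  constructor
  · intro h
    refine key.mp fun y => ?_
    have h' : (ψ₂ ∘ₗ ψ₁).baseChange ℂ = (ψ₁ ∘ₗ ψ₂).baseChange ℂ := by rw [h]
    rw [LinearMap.baseChange_comp, LinearMap.baseChange_comp] at h'
    exact (DFunLike.congr_fun h' y).symm
  · intro h
    have hcomm := key.mpr h
    have h' : (ψ₁ ∘ₗ ψ₂).baseChange ℂ = (ψ₂ ∘ₗ ψ₁).baseChange ℂ := by
      rw [LinearMap.baseChange_comp, LinearMap.baseChange_comp]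
      exact LinearMap.ext fun y => hcomm y
    ext w
    have h1 : (1 : ℂ) ⊗ₜ[ℝ] (ψ₁ (ψ₂ w)) = (1 : ℂ) ⊗ₜ[ℝ] (ψ₂ (ψ₁ w)) := by
      have := DFunLike.congr_fun h' ((1 : ℂ) ⊗ₜ[ℝ] w)
      simpa [LinearMap.baseChange_tmul] using this
    let r : ℂ ⊗[ℝ] W →ₗ[ℝ] W := TensorProduct.lift ((LinearMap.lsmul ℝ W).comp Complex.reLm)
    have h2 := congrArg r h1
    simpa [r, TensorProduct.lift.tmul] using h2
end
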